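/- arXiv:0710.1324 — 2 statements merged into one kernel-verified Lean document; each statement's English description precedes it below -/
import Mathlib

section
/- If h is a rotation by angle 2π/k acting on a plane, then summing |det(I-h^j)|⁻¹ over the nontrivial elements h^j (j=1,...,k-1) of the cyclic group generated by h gives (k²-1)/12. -/
open Real Matrix Finset

noncomputable def Rot (θ : ℝ) : Matrix (Fin 2) (Fin 2) ℝ :=
  !![Real.cos θ, -Real.sin θ; Real.sin θ, Real.cos θ]

/-!
For `w = exp (θ i)` one has `det (1 - Rot θ) = (1 - w) (1 - w⁻¹)`, so the sum runs over
the nontrivial `k`-th roots of unity `w = ζ ^ j`. For such `w`,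
`(1 - w)⁻¹ = -(1/k) ∑_{m<k} m w ^ m`, so each summand is `|T_j|² / k²` with `T_j` the
discrete Fourier transform of `m ↦ m`. Parseval gives `∑_{j<k} |T_j|² = k ∑_{m<k} m²`; removing the
term `j = 0`, which is `(∑_{m<k} m)²`, leaves `(k - 1)(2k - 1)/6 - (k - 1)²/4 = (k² - 1)/12`.
-/

section Sums

variable {R : Type*} [CommRing R]

theorem sum_range_natCast_mul_two (n : ℕ) :
    (∑ m ∈ range n, (m : R)) * 2 = n * (n - 1) := by
  induction n with
  | zero => simp
  | succ n ih => rw [sum_range_succ, add_mul, ih]; push_cast; ring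

theorem sum_range_natCast_sq_mul_six (n : ℕ) :
    (∑ m ∈ range n, (m : R) ^ 2) * 6 = n * (n - 1) * (2 * n - 1) := by
  induction n with
  | zero => simp
  | succ n ih => rw [sum_range_succ, add_mul, ih]; push_cast; ring

theorem one_sub_mul_sum_range_natCast_mul_pow (x : R) (n : ℕ) :
    (1 - x) * ∑ m ∈ range n, (m : R) * x ^ m
      = ∑ m ∈ range n, x ^ m - 1 - (n - 1) * x ^ n := by
  induction n with
  | zero => simp
  | succ n ih =>
    rw [sum_range_succ, sum_range_succ (fun m => x ^ m), mul_add, ih]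
    push_cast
    ring

end Sums

section RootsOfUnity

variable {F : Type*} [Field F] {k : ℕ}

theorem geom_sum_eq_zero_of_pow_eq_one {x : F} (hx : x ^ k = 1) (hx1 : x ≠ 1) :
    ∑ j ∈ range k, x ^ j = 0 := by
  rw [geom_sum_eq hx1, hx, sub_self, zero_div]

theorem inv_one_sub_eq_neg_sum_range_natCast_mul_pow {x : F} (hx : x ^ k = 1) (hx1 : x ≠ 1)
    (hk : (k : F) ≠ 0) : (1 - x)⁻¹ = -(∑ m ∈ range k, (m : F) * x ^ m) / k := by
  have h := one_sub_mul_sum_range_natCast_mul_pow x k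
  rw [geom_sum_eq_zero_of_pow_eq_one hx hx1, hx] at h
  have hsub : 1 - x ≠ 0 := sub_ne_zero.mpr (Ne.symm hx1)
  field_simp
  linear_combination h

namespace IsPrimitiveRoot

variable {ζ : F} (hζ : IsPrimitiveRoot ζ k)
include hζ

theorem sum_range_pow_mul_inv_pow {m n : ℕ} (hm : m < k) (hn : n < k) :
    ∑ j ∈ range k, (ζ ^ j) ^ m * (ζ ^ j)⁻¹ ^ n = if m = n then (k : F) else 0 := by
  have hpow : ∀ j, (ζ ^ j) ^ m * (ζ ^ j)⁻¹ ^ n = (ζ ^ m * (ζ ^ n)⁻¹) ^ j :=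
    fun _ => by ring
  simp_rw [hpow]
  split_ifs with h
  · simp [h, hζ.ne_zero (by omega : k ≠ 0)]
  · refine geom_sum_eq_zero_of_pow_eq_one ?_ fun h1 => h ?_
    · rw [show (ζ ^ m * (ζ ^ n)⁻¹) ^ k = (ζ ^ k) ^ m * ((ζ ^ k) ^ n)⁻¹ by ring,
        hζ.pow_eq_one, one_pow, one_pow, inv_one, mul_one]
    · exact hζ.pow_inj hm hn <| (mul_inv_eq_one₀ (pow_ne_zero _ (hζ.ne_zero (by omega)))).1 h1

theorem sum_range_mul_sum_range_inv (a b : ℕ → F) :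
    ∑ j ∈ range k,
        (∑ m ∈ range k, a m * (ζ ^ j) ^ m) * (∑ n ∈ range k, b n * (ζ ^ j)⁻¹ ^ n)
      = k * ∑ m ∈ range k, a m * b m := by
  calc _ = ∑ m ∈ range k, ∑ n ∈ range k,
        a m * b n * ∑ j ∈ range k, (ζ ^ j) ^ m * (ζ ^ j)⁻¹ ^ n := by
        simp_rw [sum_mul_sum, mul_sum]
        rw [sum_comm]
        refine sum_congr rfl fun m _ => ?_
        rw [sum_comm]
        refine sum_congr rfl fun n _ => sum_congr rfl fun j _ => by ring
    _ = ∑ m ∈ range k, ∑ n ∈ range k, if m = n then a m * b m * k else 0 := by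
        refine sum_congr rfl fun m hm => sum_congr rfl fun n hn => ?_
        rw [hζ.sum_range_pow_mul_inv_pow (mem_range.1 hm) (mem_range.1 hn)]
        split_ifs with h <;> simp [h]
    _ = k * ∑ m ∈ range k, a m * b m := by
        rw [mul_sum]
        exact sum_congr rfl fun m hm => by rw [sum_ite_eq, if_pos hm, mul_comm]

theorem sum_Ico_inv_one_sub_mul_inv_one_sub_inv [CharZero F] (hk : k ≠ 0) :
    ∑ j ∈ Ico 1 k, ((1 - ζ ^ j) * (1 - (ζ ^ j)⁻¹))⁻¹ = ((k : F) ^ 2 - 1) / 12 := by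
  set S : F → F := fun x => ∑ m ∈ range k, (m : F) * x ^ m
  have hk' : (k : F) ≠ 0 := Nat.cast_ne_zero.2 hk
  have hterm : ∀ j ∈ Ico 1 k,
      ((1 - ζ ^ j) * (1 - (ζ ^ j)⁻¹))⁻¹ = S (ζ ^ j) * S (ζ ^ j)⁻¹ / k ^ 2 := by
    intro j hj
    obtain ⟨hj1, hjk⟩ := mem_Ico.1 hj
    have hroot : (ζ ^ j) ^ k = 1 := by rw [← pow_mul, mul_comm, pow_mul, hζ.pow_eq_one, one_pow]
    have hne : ζ ^ j ≠ 1 := hζ.pow_ne_one_of_pos_of_lt (by omega) hjk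
    have hroot' : (ζ ^ j)⁻¹ ^ k = 1 := by rw [inv_pow, hroot, inv_one]
    rw [mul_inv, inv_one_sub_eq_neg_sum_range_natCast_mul_pow hroot hne hk',
      inv_one_sub_eq_neg_sum_range_natCast_mul_pow hroot' (inv_ne_one.2 hne) hk']
    ring
  have hparseval := hζ.sum_range_mul_sum_range_inv (fun m => (m : F)) (fun m => (m : F))
  rw [range_eq_Ico, sum_eq_sum_Ico_succ_bot (Nat.pos_of_ne_zero hk), ← range_eq_Ico] at hparseval
  have hsum := sum_range_natCast_mul_two (R := F) k
  have hsum_sq := sum_range_natCast_sq_mul_six (R := F) k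
  simp only [zero_add, pow_zero, inv_one, one_pow, mul_one, ← sq] at hparseval
  rw [sum_congr rfl hterm, ← sum_div, div_eq_iff (pow_ne_zero 2 hk')]
  linear_combination hparseval + (k : F) / 6 * hsum_sq
    - (∑ m ∈ range k, (m : F) + k * (k - 1) / 2) / 2 * hsum

end IsPrimitiveRoot

end RootsOfUnity

theorem Rot_mul_Rot (θ φ : ℝ) : Rot θ * Rot φ = Rot (θ + φ) := by
  ext i j
  fin_cases i <;> fin_cases j <;> simp [Rot, Matrix.mul_apply, cos_add, sin_add] <;> ring

theorem Rot_pow (θ : ℝ) (j : ℕ) : Rot θ ^ j = Rot (j * θ) := by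
  induction j with
  | zero => simp [Rot, Matrix.one_fin_two]
  | succ j ih => rw [pow_succ, ih, Rot_mul_Rot, Nat.cast_succ, add_one_mul]

theorem det_one_sub_Rot (θ : ℝ) : (1 - Rot θ).det = 2 - 2 * cos θ := by
  rw [Matrix.det_fin_two, Rot, Matrix.one_fin_two]
  simp only [of_apply, cons_val', cons_val_zero, cons_val_fin_one, Matrix.sub_apply, cons_val_one]
  linear_combination sin_sq_add_cos_sq θ

theorem det_one_sub_Rot_nonneg (θ : ℝ) : 0 ≤ (1 - Rot θ).det := by
  rw [det_one_sub_Rot]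
  linarith [cos_le_one θ]

theorem ofReal_det_one_sub_Rot (θ : ℝ) :
    ((1 - Rot θ).det : ℂ)
      = (1 - Complex.exp (θ * Complex.I)) * (1 - (Complex.exp (θ * Complex.I))⁻¹) := by
  have hw : Complex.exp (θ * Complex.I) * Complex.exp (-θ * Complex.I) = 1 := by
    rw [← Complex.exp_add, ← add_mul, add_neg_cancel, zero_mul, Complex.exp_zero]
  rw [det_one_sub_Rot, ← Complex.exp_neg, ← neg_mul]
  push_cast
  rw [Complex.two_cos]
  linear_combination -hw

theorem sum_abs_det_inv_rotation (k : ℕ) (hk : 1 ≤ k) :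
    ∑ j ∈ Finset.Ico 1 k, |((1 : Matrix (Fin 2) (Fin 2) ℝ) - (Rot (2 * π / k)) ^ j).det|⁻¹
      = ((k : ℝ) ^ 2 - 1) / 12 := by
  have hζ := Complex.isPrimitiveRoot_exp k (by omega)
  apply Complex.ofReal_injective
  push_cast
  rw [← hζ.sum_Ico_inv_one_sub_mul_inv_one_sub_inv (by omega)]
  refine sum_congr rfl fun j _ => ?_
  have hexp : Complex.exp (2 * π * Complex.I / k) ^ j
      = Complex.exp (↑(j * (2 * π / k)) * Complex.I) := by
    rw [← Complex.exp_nat_mul]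
    push_cast
    congr 1
    ring
  rw [Rot_pow, abs_of_nonneg (det_one_sub_Rot_nonneg _), ofReal_det_one_sub_Rot, hexp]
end

section
/- If ∑_{n≥0} e^{-λ_n t} ~ (V/√(4πt)) as t → 0⁺ for a nondecreasing unbounded sequence (λ_n) of nonnegative reals and V > 0, then N(λ) = #{n : λ_n ≤ λ} ~ (V/π)·√λ as λ → ∞. -/
/-!
Karamata's Tauberian argument. Write `σ(t) = t^α ∑ f(e^{-λᵢ t})` for a test function `f`.
For `f(y) = y^(k+1)` the hypothesis at the rescaled time `(k+1) t` gives
`σ(t) → c (k+1)^{-α} = (c / Γ(α)) ∫₀^∞ f(e^{-x}) x^{α-1} dx`, hence the same for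
`f(y) = y p(y)` with `p` a polynomial. Both sides are monotone in `f`, so Weierstrass
approximation extends this to `f(y) = y g(y)` with `g` continuous, and squeezing between such
functions reaches the indicator of `[e^{-1}, 1]`, for which `σ(t) = t^α N(1/t)` and the integral
is `1/α`. With `α = 1/2` and `c = V / √(4π)` the limit is `c / Γ(3/2) = V / π`.
-/

open Real Filter Topology MeasureTheory Set

theorem tendsto_of_forall_sandwich {β : Type*} {F : Filter β} {u : β → ℝ} {a : ℝ}
    (h : ∀ ε > 0, ∃ v w : β → ℝ, ∃ b b' : ℝ, Tendsto v F (𝓝 b) ∧ Tendsto w F (𝓝 b') ∧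
      a - ε ≤ b ∧ b' ≤ a + ε ∧ ∀ᶠ x in F, v x ≤ u x ∧ u x ≤ w x) :
    Tendsto u F (𝓝 a) := by
  refine tendsto_order.2 ⟨fun a' ha' => ?_, fun a' ha' => ?_⟩
  · obtain ⟨v, _, b, _, hv, -, hb, -, hvw⟩ := h ((a - a') / 2) (by linarith)
    filter_upwards [hv.eventually_const_lt (show a' < b by linarith), hvw] with x hx hx'
    linarith [hx'.1]
  · obtain ⟨_, w, _, b', -, hw, -, hb', hvw⟩ := h ((a' - a) / 2) (by linarith)
    filter_upwards [hw.eventually_lt_const (show b' < a' by linarith), hvw] with x hx hx'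
    linarith [hx'.2]

lemma Real.exp_mem_Ioc_of_nonpos {x : ℝ} (hx : x ≤ 0) : exp x ∈ Ioc 0 1 :=
  ⟨exp_pos x, exp_le_one_iff.2 hx⟩

namespace Karamata

variable {ι : Type*}

noncomputable def scaledSum (l : ι → ℝ) (α : ℝ) (f : ℝ → ℝ) (t : ℝ) : ℝ :=
  t ^ α * ∑' i, f (exp (-l i * t))

noncomputable def limitIntegral (α : ℝ) (f : ℝ → ℝ) : ℝ :=
  (∫ x in Ioi 0, f (exp (-x)) * x ^ (α - 1)) / Gamma α

def Admissible (f : ℝ → ℝ) : Prop :=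
  Measurable f ∧ ∃ M, ∀ y ∈ Ioc (0 : ℝ) 1, |f y| ≤ M * y

lemma exp_neg_mul_mem_Ioc {l t : ℝ} (hl : 0 ≤ l) (ht : 0 ≤ t) : exp (-l * t) ∈ Ioc 0 1 :=
  exp_mem_Ioc_of_nonpos (mul_nonpos_of_nonpos_of_nonneg (neg_nonpos.2 hl) ht)

lemma admissible_mul_of_continuous {g : ℝ → ℝ} (hg : Continuous g) :
    Admissible fun y => y * g y := by
  obtain ⟨M, hM⟩ := isCompact_Icc.exists_bound_of_continuousOn (hg.continuousOn (s := Icc 0 1))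
  refine ⟨(continuous_id.mul hg).measurable, M, fun y hy => ?_⟩
  rw [abs_mul, abs_of_pos hy.1, mul_comm]
  exact mul_le_mul_of_nonneg_right (hM y (Ioc_subset_Icc_self hy)) hy.1.le

lemma admissible_indicator (s : ℝ) : Admissible ((Ici (exp (-s))).indicator 1) := by
  refine ⟨measurable_const.indicator measurableSet_Ici, exp s, fun y hy => ?_⟩
  by_cases hys : y ∈ Ici (exp (-s))
  · rw [indicator_of_mem hys, Pi.one_apply, abs_one]
    calc (1 : ℝ) = exp s * exp (-s) := by rw [← exp_add, add_neg_cancel, exp_zero]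
      _ ≤ exp s * y := mul_le_mul_of_nonneg_left hys (exp_pos s).le
  · rw [indicator_of_notMem hys, abs_zero]
    exact mul_nonneg (exp_pos s).le hy.1.le

variable {l : ι → ℝ} {α : ℝ} {f g : ℝ → ℝ}

lemma Admissible.summable (hf : Admissible f) (hl : ∀ i, 0 ≤ l i) {t : ℝ} (ht : 0 ≤ t)
    (hsum : Summable fun i => exp (-l i * t)) : Summable fun i => f (exp (-l i * t)) := by
  obtain ⟨-, M, hM⟩ := hf
  exact (hsum.mul_left M).of_norm_bounded fun i => hM _ (exp_neg_mul_mem_Ioc (hl i) ht)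

lemma Admissible.integrableOn (hf : Admissible f) (hα : 0 < α) :
    IntegrableOn (fun x => f (exp (-x)) * x ^ (α - 1)) (Ioi 0) := by
  obtain ⟨hmeas, M, hM⟩ := hf
  refine ((GammaIntegral_convergent hα).const_mul M).mono'
    ((hmeas.comp (measurable_exp.comp measurable_neg)).mul
      (measurable_id.pow_const _)).aestronglyMeasurable ?_
  filter_upwards [ae_restrict_mem measurableSet_Ioi] with x hx
  have hxα : 0 ≤ x ^ (α - 1) := rpow_nonneg (le_of_lt hx) _
  rw [norm_mul, Real.norm_of_nonneg hxα, ← mul_assoc]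
  exact mul_le_mul_of_nonneg_right
    (hM _ (exp_mem_Ioc_of_nonpos (neg_nonpos.2 (le_of_lt hx)))) hxα

lemma scaledSum_add (hf : Admissible f) (hg : Admissible g) (hl : ∀ i, 0 ≤ l i) {t : ℝ}
    (ht : 0 ≤ t) (hsum : Summable fun i => exp (-l i * t)) :
    scaledSum l α (fun y => f y + g y) t = scaledSum l α f t + scaledSum l α g t := by
  rw [scaledSum, (hf.summable hl ht hsum).tsum_add (hg.summable hl ht hsum), mul_add]; rfl

lemma scaledSum_const_mul (a : ℝ) (t : ℝ) :
    scaledSum l α (fun y => a * f y) t = a * scaledSum l α f t := by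
  rw [scaledSum, scaledSum, tsum_mul_left, mul_left_comm]

lemma scaledSum_mono (hf : Admissible f) (hg : Admissible g) (hfg : ∀ y ∈ Ioc (0 : ℝ) 1, f y ≤ g y)
    (hl : ∀ i, 0 ≤ l i) {t : ℝ} (ht : 0 ≤ t) (hsum : Summable fun i => exp (-l i * t)) :
    scaledSum l α f t ≤ scaledSum l α g t :=
  mul_le_mul_of_nonneg_left ((hf.summable hl ht hsum).tsum_le_tsum
    (fun i => hfg _ (exp_neg_mul_mem_Ioc (hl i) ht)) (hg.summable hl ht hsum)) (rpow_nonneg ht α)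

lemma tendsto_scaledSum_of_sandwich (hl : ∀ i, 0 ≤ l i)
    (hsum : ∀ t > 0, Summable fun i => exp (-l i * t)) (hf : Admissible f) {a : ℝ}
    (h : ∀ ε > 0, ∃ f₁ f₂ : ℝ → ℝ, ∃ a₁ a₂ : ℝ, Admissible f₁ ∧ Admissible f₂ ∧
      (∀ y ∈ Ioc (0 : ℝ) 1, f₁ y ≤ f y ∧ f y ≤ f₂ y) ∧
      Tendsto (scaledSum l α f₁) (𝓝[>] 0) (𝓝 a₁) ∧ Tendsto (scaledSum l α f₂) (𝓝[>] 0) (𝓝 a₂) ∧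
      a - ε ≤ a₁ ∧ a₂ ≤ a + ε) :
    Tendsto (scaledSum l α f) (𝓝[>] 0) (𝓝 a) := by
  refine tendsto_of_forall_sandwich fun ε hε => ?_
  obtain ⟨f₁, f₂, a₁, a₂, hf₁, hf₂, hsand, h₁, h₂, ha₁, ha₂⟩ := h ε hε
  refine ⟨_, _, a₁, a₂, h₁, h₂, ha₁, ha₂, ?_⟩
  filter_upwards [self_mem_nhdsWithin] with t (ht : 0 < t)
  exact ⟨scaledSum_mono hf₁ hf (fun y hy => (hsand y hy).1) hl ht.le (hsum t ht),
    scaledSum_mono hf hf₂ (fun y hy => (hsand y hy).2) hl ht.le (hsum t ht)⟩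

lemma limitIntegral_add (hf : Admissible f) (hg : Admissible g) (hα : 0 < α) :
    limitIntegral α (fun y => f y + g y) = limitIntegral α f + limitIntegral α g := by
  simp only [limitIntegral, add_mul]
  rw [integral_add (hf.integrableOn hα) (hg.integrableOn hα), add_div]

lemma limitIntegral_const_mul (a : ℝ) :
    limitIntegral α (fun y => a * f y) = a * limitIntegral α f := by
  simp only [limitIntegral, mul_assoc, integral_const_mul, mul_div_assoc]

lemma limitIntegral_mono (hf : Admissible f) (hg : Admissible g)
    (hfg : ∀ y ∈ Ioc (0 : ℝ) 1, f y ≤ g y) (hα : 0 < α) :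
    limitIntegral α f ≤ limitIntegral α g := by
  refine div_le_div_of_nonneg_right ?_ (Gamma_pos_of_pos hα).le
  refine setIntegral_mono_on (hf.integrableOn hα) (hg.integrableOn hα) measurableSet_Ioi
    fun x hx => mul_le_mul_of_nonneg_right ?_ (rpow_nonneg (le_of_lt hx) _)
  exact hfg _ (exp_mem_Ioc_of_nonpos (neg_nonpos.2 (le_of_lt hx)))

lemma limitIntegral_pow_succ (hα : 0 < α) (k : ℕ) :
    limitIntegral α (· ^ (k + 1)) = (1 / (k + 1 : ℝ)) ^ α := by
  have hexp : ∀ x : ℝ, exp (-x) ^ (k + 1) * x ^ (α - 1) = x ^ (α - 1) * exp (-((k + 1) * x)) := by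
    intro x
    rw [← exp_nat_mul, mul_comm]
    push_cast
    ring_nf
  simp only [limitIntegral, hexp]
  rw [integral_rpow_mul_exp_neg_mul_Ioi hα (by positivity),
    mul_div_cancel_right₀ _ (Gamma_pos_of_pos hα).ne']

lemma limitIntegral_indicator (hα : 0 < α) {s : ℝ} (hs : 0 ≤ s) :
    limitIntegral α ((Ici (exp (-s))).indicator 1) = s ^ α / Gamma (α + 1) := by
  have hind : ∀ x : ℝ, (Ici (exp (-s))).indicator 1 (exp (-x)) * x ^ (α - 1)
      = (Iic s).indicator (fun x : ℝ => x ^ (α - 1)) x := by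
    intro x
    by_cases hx : x ≤ s
    · rw [indicator_of_mem (show exp (-x) ∈ Ici (exp (-s)) from exp_le_exp.2 (by linarith)),
        indicator_of_mem (show x ∈ Iic s from hx), Pi.one_apply, one_mul]
    · rw [indicator_of_notMem (show exp (-x) ∉ Ici (exp (-s)) from
          fun h => hx (by simpa using exp_le_exp.1 h)),
        indicator_of_notMem (show x ∉ Iic s from hx), zero_mul]
  simp only [limitIntegral, hind]
  rw [setIntegral_indicator measurableSet_Iic, Ioi_inter_Iic, ← intervalIntegral.integral_of_le hs,
    integral_rpow (Or.inl (by linarith)), sub_add_cancel, zero_rpow hα.ne', sub_zero,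
    Gamma_add_one hα.ne', div_div, mul_comm α]

variable {c : ℝ}

lemma tendsto_scaledSum_pow_succ (hα : 0 < α) (h : Tendsto (scaledSum l α id) (𝓝[>] 0) (𝓝 c))
    (k : ℕ) :
    Tendsto (scaledSum l α (· ^ (k + 1))) (𝓝[>] 0) (𝓝 (c * limitIntegral α (· ^ (k + 1)))) := by
  set r : ℝ := k + 1
  have hr : 0 < r := by positivity
  have hscale : Tendsto (r * ·) (𝓝[>] 0) (𝓝[>] 0) :=
    tendsto_iff_comap.2 (comap_mulLeft_nhdsGT_zero hr).ge
  rw [limitIntegral_pow_succ hα, mul_comm]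
  refine ((h.comp hscale).const_mul ((1 / r) ^ α)).congr' ?_
  filter_upwards [self_mem_nhdsWithin] with t (ht : 0 < t)
  have hrt : 1 / r * (r * t) = t := by field_simp
  have hexp : ∀ i, exp (-l i * (r * t)) = exp (-l i * t) ^ (k + 1) := by
    intro i
    rw [← exp_nat_mul]
    congr 1
    push_cast [r]
    ring
  simp only [Function.comp_apply, scaledSum, id, hexp]
  rw [← mul_assoc, ← mul_rpow (by positivity) (by positivity), hrt]

lemma tendsto_scaledSum_polynomial (hl : ∀ i, 0 ≤ l i)
    (hsum : ∀ t > 0, Summable fun i => exp (-l i * t)) (hα : 0 < α)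
    (h : Tendsto (scaledSum l α id) (𝓝[>] 0) (𝓝 c)) (p : Polynomial ℝ) :
    Tendsto (scaledSum l α fun y => y * p.eval y) (𝓝[>] 0)
      (𝓝 (c * limitIntegral α fun y => y * p.eval y)) := by
  induction p using Polynomial.induction_on' with
  | add p q hp hq =>
    have hp' := admissible_mul_of_continuous p.continuous
    have hq' := admissible_mul_of_continuous q.continuous
    simp only [Polynomial.eval_add, mul_add]
    rw [limitIntegral_add hp' hq' hα, mul_add]
    refine (hp.add hq).congr' ?_
    filter_upwards [self_mem_nhdsWithin] with t (ht : 0 < t)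
    exact (scaledSum_add hp' hq' hl ht.le (hsum t ht)).symm
  | monomial n a =>
    have hmon : (fun y => y * (Polynomial.monomial n a).eval y) = fun y => a * y ^ (n + 1) := by
      ext y
      rw [Polynomial.eval_monomial]
      ring
    rw [hmon, limitIntegral_const_mul, mul_left_comm]
    exact ((tendsto_scaledSum_pow_succ hα h n).const_mul a).congr
      fun t => (scaledSum_const_mul a t).symm

lemma tendsto_scaledSum_mul_of_continuous (hl : ∀ i, 0 ≤ l i)
    (hsum : ∀ t > 0, Summable fun i => exp (-l i * t)) (hα : 0 < α)
    (h : Tendsto (scaledSum l α id) (𝓝[>] 0) (𝓝 c)) (hc : 0 ≤ c) (hg : Continuous g) :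
    Tendsto (scaledSum l α fun y => y * g y) (𝓝[>] 0)
      (𝓝 (c * limitIntegral α fun y => y * g y)) := by
  have adm := fun q : Polynomial ℝ => admissible_mul_of_continuous q.continuous
  refine tendsto_scaledSum_of_sandwich hl hsum (admissible_mul_of_continuous hg) fun ε hε => ?_
  set δ := ε / (2 * (c + 1))
  have hcδ : c * (2 * δ) ≤ ε := by
    rw [show c * (2 * δ) = ε * (c / (c + 1)) by simp only [δ]; field_simp]
    exact mul_le_of_le_one_right hε.le ((div_le_one (by positivity)).2 (by linarith))
  obtain ⟨p, hp⟩ := exists_polynomial_near_of_continuousOn 0 1 g hg.continuousOn δ (by positivity)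
  set p₁ := p - Polynomial.C δ
  have hsand : ∀ y ∈ Ioc (0 : ℝ) 1,
      y * p₁.eval y ≤ y * g y ∧ y * g y ≤ y * (p₁ + Polynomial.C (2 * δ)).eval y := by
    intro y hy
    have hpy := abs_lt.1 (hp y (Ioc_subset_Icc_self hy))
    simp only [p₁, Polynomial.eval_sub, Polynomial.eval_add, Polynomial.eval_C]
    constructor <;> exact mul_le_mul_of_nonneg_left (by linarith) hy.1.le
  have hgap : limitIntegral α (fun y => y * (p₁ + Polynomial.C (2 * δ)).eval y)
      = limitIntegral α (fun y => y * p₁.eval y) + 2 * δ := by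
    have hC : (fun y => y * (Polynomial.C (2 * δ)).eval y) = fun y => 2 * δ * y ^ (0 + 1) := by
      ext y
      rw [Polynomial.eval_C, zero_add, pow_one, mul_comm]
    simp only [Polynomial.eval_add, mul_add]
    rw [limitIntegral_add (adm _) (adm _) hα, hC, limitIntegral_const_mul,
      limitIntegral_pow_succ hα]
    norm_num
  have hlow := limitIntegral_mono (adm p₁) (admissible_mul_of_continuous hg)
    (fun y hy => (hsand y hy).1) hα
  have hhigh := limitIntegral_mono (admissible_mul_of_continuous hg) (adm _)
    (fun y hy => (hsand y hy).2) hα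
  refine ⟨_, _, _, _, adm _, adm _, hsand, tendsto_scaledSum_polynomial hl hsum hα h _,
    tendsto_scaledSum_polynomial hl hsum hα h _, ?_, ?_⟩
  · have := mul_le_mul_of_nonneg_left hhigh hc
    rw [hgap] at this
    linarith
  · have := mul_le_mul_of_nonneg_left hlow hc
    rw [hgap]
    linarith

/-- `y * cutoff a b y` is the ramp rising linearly from `0` at `a` to `1` at `b`; dividing by
`max y a` rather than `y` keeps `cutoff a b` continuous. -/
noncomputable def cutoff (a b y : ℝ) : ℝ :=
  max 0 (min 1 ((y - a) / (b - a))) / max y a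

lemma continuous_cutoff {a : ℝ} (ha : 0 < a) (b : ℝ) : Continuous (cutoff a b) :=
  (continuous_const.max
    (continuous_const.min ((continuous_id.sub continuous_const).div_const _))).div
      (continuous_id.max continuous_const) fun y => (ha.trans_le (le_max_right y a)).ne'

lemma indicator_le_mul_cutoff {a b y : ℝ} (hab : a < b) (hy : 0 < y) :
    (Ici b).indicator 1 y ≤ y * cutoff a b y := by
  by_cases hby : b ≤ y
  · have hclamp : (1 : ℝ) ≤ (y - a) / (b - a) := (one_le_div (by linarith)).2 (by linarith)
    rw [indicator_of_mem (show y ∈ Ici b from hby), Pi.one_apply, cutoff, min_eq_left hclamp,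
      max_eq_right zero_le_one, max_eq_left (by linarith), mul_one_div_cancel hy.ne']
  · rw [indicator_of_notMem (show y ∉ Ici b from hby)]
    exact mul_nonneg hy.le (div_nonneg (le_max_left _ _) (hy.le.trans (le_max_left _ _)))

lemma mul_cutoff_le_indicator {a b y : ℝ} (hab : a < b) (hy : 0 < y) :
    y * cutoff a b y ≤ (Ici a).indicator 1 y := by
  by_cases hay : a ≤ y
  · rw [indicator_of_mem (show y ∈ Ici a from hay), Pi.one_apply, cutoff, max_eq_left hay,
      mul_div_cancel₀ _ hy.ne']
    exact max_le zero_le_one (min_le_left _ _)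
  · have hneg : (y - a) / (b - a) ≤ 0 := div_nonpos_of_nonpos_of_nonneg (by linarith) (by linarith)
    rw [indicator_of_notMem (show y ∉ Ici a from hay), cutoff,
      min_eq_right (hneg.trans zero_le_one), max_eq_left hneg, zero_div, mul_zero]

lemma tendsto_scaledSum_indicator (hl : ∀ i, 0 ≤ l i)
    (hsum : ∀ t > 0, Summable fun i => exp (-l i * t)) (hα : 0 < α)
    (h : Tendsto (scaledSum l α id) (𝓝[>] 0) (𝓝 c)) (hc : 0 ≤ c) :
    Tendsto (scaledSum l α ((Ici (exp (-1))).indicator 1)) (𝓝[>] 0)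
      (𝓝 (c / Gamma (α + 1))) := by
  have hF : Tendsto (fun s : ℝ => c * (s ^ α / Gamma (α + 1))) (𝓝 1) (𝓝 (c / Gamma (α + 1))) := by
    have := ((continuousAt_rpow_const 1 α (Or.inl one_ne_zero)).div_const
      (Gamma (α + 1))).const_mul c
    simpa [ContinuousAt, div_eq_mul_inv] using this
  have hcut := fun s s' : ℝ =>
    admissible_mul_of_continuous (continuous_cutoff (exp_pos (-s')) (exp (-s)))
  have hlim := fun s s' : ℝ =>
    tendsto_scaledSum_mul_of_continuous hl hsum hα h hc
      (continuous_cutoff (exp_pos (-s')) (exp (-s)))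
  refine tendsto_scaledSum_of_sandwich hl hsum (admissible_indicator 1) fun ε hε => ?_
  have hnear := hF.eventually (Ioo_mem_nhds (show c / Gamma (α + 1) - ε < _ by linarith)
    (show _ < c / Gamma (α + 1) + ε by linarith))
  obtain ⟨s, hFs, hs⟩ := ((hnear.filter_mono nhdsWithin_le_nhds).and
    (Ioo_mem_nhdsLT zero_lt_one)).exists
  obtain ⟨s', hFs', hs'⟩ := ((hnear.filter_mono nhdsWithin_le_nhds).and
    (self_mem_nhdsWithin (s := Ioi (1 : ℝ)))).exists
  have h₁ : exp (-1) < exp (-s) := exp_lt_exp.2 (by linarith [hs.2])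
  have h₂ : exp (-s') < exp (-1) := exp_lt_exp.2 (by linarith [show 1 < s' from hs'])
  refine ⟨_, _, _, _, hcut s 1, hcut 1 s', fun y hy =>
    ⟨mul_cutoff_le_indicator h₁ hy.1, indicator_le_mul_cutoff h₂ hy.1⟩, hlim s 1, hlim 1 s', ?_, ?_⟩
  · calc c / Gamma (α + 1) - ε ≤ c * (s ^ α / Gamma (α + 1)) := hFs.1.le
      _ = c * limitIntegral α ((Ici (exp (-s))).indicator 1) := by
        rw [limitIntegral_indicator hα hs.1.le]
      _ ≤ _ := mul_le_mul_of_nonneg_left (limitIntegral_mono (admissible_indicator s) (hcut s 1)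
        (fun y hy => indicator_le_mul_cutoff h₁ hy.1) hα) hc
  · calc _ ≤ c * limitIntegral α ((Ici (exp (-s'))).indicator 1) :=
          mul_le_mul_of_nonneg_left (limitIntegral_mono (hcut 1 s') (admissible_indicator s')
            (fun y hy => mul_cutoff_le_indicator h₂ hy.1) hα) hc
      _ = c * (s' ^ α / Gamma (α + 1)) := by
        rw [limitIntegral_indicator hα (zero_le_one.trans (le_of_lt hs'))]
      _ ≤ c / Gamma (α + 1) + ε := hFs'.2.le

lemma scaledSum_indicator_eq (l : ι → ℝ) (α : ℝ) {t : ℝ} (ht : 0 < t) :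
    scaledSum l α ((Ici (exp (-1))).indicator 1) t = t ^ α * Nat.card {i | l i ≤ t⁻¹} := by
  have hind : ∀ i, (Ici (exp (-1))).indicator (1 : ℝ → ℝ) (exp (-l i * t))
      = {i | l i ≤ t⁻¹}.indicator 1 i := by
    intro i
    have hiff : exp (-1) ≤ exp (-l i * t) ↔ l i ≤ t⁻¹ := by
      rw [exp_le_exp, ← one_div, le_div_iff₀ ht]
      constructor <;> intro <;> linarith
    simp only [indicator, mem_Ici, mem_ofPred_eq, hiff, Pi.one_apply]
  simp only [scaledSum, hind, ← tsum_subtype, tsum_const, nsmul_eq_mul, Pi.one_apply, mul_one]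

end Karamata

open Karamata in
theorem tendsto_card_div_rpow_of_tendsto_tsum_exp {ι : Type*} {l : ι → ℝ} (hl : ∀ i, 0 ≤ l i)
    {α c : ℝ} (hα : 0 < α) (hsum : ∀ t > 0, Summable fun i => exp (-l i * t))
    (h : Tendsto (fun t => t ^ α * ∑' i, exp (-l i * t)) (𝓝[>] 0) (𝓝 c)) :
    Tendsto (fun x => (Nat.card {i | l i ≤ x} : ℝ) / x ^ α) atTop (𝓝 (c / Gamma (α + 1))) := by
  have hc : 0 ≤ c := ge_of_tendsto h <| eventually_mem_nhdsWithin.mono fun t (ht : 0 < t) =>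
    mul_nonneg (rpow_nonneg ht.le α) (tsum_nonneg fun i => (exp_pos _).le)
  refine ((tendsto_scaledSum_indicator hl hsum hα h hc).comp
    tendsto_inv_atTop_nhdsGT_zero).congr' ?_
  filter_upwards [eventually_gt_atTop 0] with x hx
  rw [Function.comp_apply, scaledSum_indicator_eq l α (inv_pos.2 hx), inv_inv, inv_rpow hx.le,
    div_eq_inv_mul]

theorem karamata_weyl_codim_one_general (l : ℕ → ℝ) (hmono : Monotone l) (h0 : 0 ≤ l 0)
    (V : ℝ)
    (hsum : ∀ t : ℝ, 0 < t → Summable fun n : ℕ => Real.exp (-l n * t))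
    (hasym : Filter.Tendsto
      (fun t : ℝ => (∑' n : ℕ, Real.exp (-l n * t)) * Real.sqrt (4 * π * t))
      (𝓝[>] 0) (𝓝 V)) :
    Filter.Tendsto
      (fun x : ℝ => (Nat.card {n : ℕ | l n ≤ x} : ℝ) / Real.sqrt x)
      Filter.atTop (𝓝 (V / π)) := by
  have hl : ∀ n, 0 ≤ l n := fun n => h0.trans (hmono n.zero_le)
  have h4π : 0 < √(4 * π) := sqrt_pos.2 (by positivity)
  have hheat : Tendsto (fun t => t ^ (1 / 2 : ℝ) * ∑' n, exp (-l n * t)) (𝓝[>] 0)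
      (𝓝 (V / √(4 * π))) := by
    refine (hasym.div_const _).congr' ?_
    filter_upwards [self_mem_nhdsWithin] with t (ht : 0 < t)
    rw [sqrt_mul (by positivity), ← sqrt_eq_rpow, mul_left_comm, mul_div_cancel_left₀ _ h4π.ne',
      mul_comm]
  have hΓ : V / √(4 * π) / Gamma (1 / 2 + 1) = V / π := by
    rw [Gamma_add_one (by norm_num), Gamma_one_half_eq,
      show (4 : ℝ) * π = 2 ^ 2 * π by ring, sqrt_mul (by positivity), sqrt_sq zero_le_two]
    field_simp
    rw [sq_sqrt pi_pos.le]
  simpa only [hΓ, ← sqrt_eq_rpow] using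
    tendsto_card_div_rpow_of_tendsto_tsum_exp hl one_half_pos hsum hheat

theorem karamata_weyl_codim_one (l : ℕ → ℝ) (hmono : Monotone l) (h0 : 0 ≤ l 0)
    (htop : Filter.Tendsto l Filter.atTop Filter.atTop)
    (V : ℝ) (hV : 0 < V)
    (hsum : ∀ t : ℝ, 0 < t → Summable fun n : ℕ => Real.exp (-l n * t))
    (hasym : Filter.Tendsto
      (fun t : ℝ => (∑' n : ℕ, Real.exp (-l n * t)) * Real.sqrt (4 * π * t))
      (𝓝[>] 0) (𝓝 V)) :
    Filter.Tendsto
      (fun x : ℝ => (Nat.card {n : ℕ | l n ≤ x} : ℝ) / Real.sqrt x)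
      Filter.atTop (𝓝 (V / π)) :=
  karamata_weyl_codim_one_general l hmono h0 V hsum hasym
end
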